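/- arXiv:2104.07339 — 4 statements merged into one kernel-verified Lean document; each statement's English description precedes it below -/
import Mathlib

section
/- Let G be a group, H ≤ G a subgroup, and g₀, g₁, …, g_s ∈ G. Define g(n) = g₀^{C(n,0)} · g₁^{C(n,1)} ⋯ g_s^{C(n,s)} where C(n,i) is the binomial coefficient. Then g(n) ∈ H for all integers n ≥ 0 if and only if g₀, g₁, …, g_s ∈ H. -/
theorem List.prod_map_range_pow_choose_of_le {M : Type*} [Monoid M] (g : ℕ → M) {n s : ℕ}
    (hns : n ≤ s) :
    ((List.range (s + 1)).map fun i => g i ^ n.choose i).prod =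
      ((List.range n).map fun i => g i ^ n.choose i).prod * g n := by
  induction s, hns using Nat.le_induction with
  | base => simp [List.range_succ]
  | succ s hns ih =>
    rw [List.range_succ, List.map_append, List.prod_append, ih,
      List.map_singleton, List.prod_singleton,
      Nat.choose_eq_zero_of_lt (by omega : n < s + 1), pow_zero, mul_one]

theorem List.prod_map_range_pow_mem {M S : Type*} [Monoid M] [SetLike S M] [SubmonoidClass S M]
    {K : S} {g : ℕ → M} {m : ℕ} (e : ℕ → ℕ) (hg : ∀ i < m, g i ∈ K) :
    ((List.range m).map fun i => g i ^ e i).prod ∈ K := by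
  refine list_prod_mem fun x hx => ?_
  obtain ⟨i, hi, rfl⟩ := List.mem_map.mp hx
  exact pow_mem (hg i (List.mem_range.mp hi)) _

/-- For a polynomial sequence `g(n) = g₀^{C(n,0)} ⋯ g_s^{C(n,s)}` in a group `G`,
the sequence takes values in a subgroup `H` iff all coefficients `g₀, …, g_s` lie in `H`. -/
theorem stmt0 {G : Type*} [Group G] (H : Subgroup G) (s : ℕ) (g : ℕ → G) :
    (∀ n : ℕ, ((List.range (s + 1)).map (fun i => g i ^ n.choose i)).prod ∈ H) ↔
      (∀ i ≤ s, g i ∈ H) := by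
  refine ⟨fun hseq i => ?_, fun hg n => List.prod_map_range_pow_mem _ fun i hi => hg i (by omega)⟩
  induction i using Nat.strong_induction_on with
  | _ i ih =>
    intro hi
    -- Triangularity: g(i) = (∏_{j<i} g_j^{C(i,j)}) * g_i, and the first factor is in H by induction.
    have hprefix : ((List.range i).map fun j => g j ^ i.choose j).prod ∈ H :=
      List.prod_map_range_pow_mem _ fun j hj => ih j hj (by omega)
    have hseq_i := hseq i
    rw [List.prod_map_range_pow_choose_of_le g hi] at hseq_i
    exact (H.mul_mem_cancel_left hprefix).mp hseq_i
end

section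
/- Let P₁, …, P_t be distinct nonzero integral polynomials with P_i(0)=0, and suppose that a₀ x^d + a₁ (x+P₁(y))^d + … + a_t (x+P_t(y))^d = 0 as a polynomial identity in ℝ[x,y], where d ≥ t and a₀, …, a_t ∈ ℝ. Then a₀ = a₁ = … = a_t = 0. In other words, a homogeneous polynomial progression of length t+1 satisfies no nontrivial homogeneous algebraic relation of degree ≥ t, so its algebraic complexity is at most t−1. -/
/-!
Specialising `y` to a point `y₀` at which the `Pᵢ` are nonzero and pairwise distinct turns the
relation into `a₀ xᵈ + ∑ aᵢ (x + cᵢ)ᵈ = 0` with distinct nonzero constants `cᵢ`. The coefficient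
of `x^(d-k)` gives `∑ aᵢ cᵢᵏ = 0` for `1 ≤ k ≤ d`; as `t ≤ d`, the cases `k = 1, …, t` form a
Vandermonde system in the vector `(aᵢ cᵢ)`, so all `aᵢ` with `i ≥ 1` vanish, and then so does `a₀`.
-/

open Polynomial

namespace Polynomial

variable {R : Type*} [CommRing R] [IsDomain R]

theorem exists_eval_ne_zero_and_injective_eval [Infinite R] {ι : Type*} [Fintype ι]
    (P : ι → R[X]) (hne : ∀ i, P i ≠ 0) (hinj : Function.Injective P) :
    ∃ y, (∀ i, (P i).eval y ≠ 0) ∧ Function.Injective fun i => (P i).eval y := by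
  classical
  set Q : R[X] := ∏ i, ∏ j, if i = j then P i else P i - P j
  have hQ : Q ≠ 0 := Finset.prod_ne_zero_iff.mpr fun i _ => Finset.prod_ne_zero_iff.mpr
    fun j _ => by
      split_ifs with hij
      · exact hne i
      · exact sub_ne_zero.mpr (hinj.ne hij)
  obtain ⟨y, hy⟩ : ∃ y, Q.eval y ≠ 0 := by
    by_contra! h
    exact hQ (zero_of_eval_zero Q h)
  have hfactor : ∀ i j, (if i = j then P i else P i - P j).eval y ≠ 0 := by
    simpa only [Q, eval_prod, Finset.prod_ne_zero_iff, Finset.mem_univ, forall_const] using hy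
  refine ⟨y, fun i => by simpa using hfactor i i, fun i j hij => ?_⟩
  by_contra hne'
  have hdiff := hfactor i j
  rw [if_neg hne', eval_sub, sub_ne_zero] at hdiff
  exact hdiff hij

theorem sum_mul_pow_eq_zero_of_add_sum_X_add_C_pow_eq_zero [CharZero R] {ι : Type*} [Fintype ι]
    {a₀ : R} {b c : ι → R} {d : ℕ}
    (h : C a₀ * X ^ d + ∑ i, C (b i) * (X + C (c i)) ^ d = 0) {k : ℕ} (hk : 0 < k)
    (hkd : k ≤ d) : ∑ i, b i * c i ^ k = 0 := by
  have hcoeff := congrArg (coeff · (d - k)) h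
  simp only [coeff_add, finsetSum_coeff, coeff_C_mul, coeff_X_pow, coeff_X_add_C_pow,
    coeff_zero, Nat.sub_sub_self hkd, if_neg (show d - k ≠ d by omega), mul_zero,
    zero_add] at hcoeff
  have hchoose : (d.choose (d - k) : R) ≠ 0 := by
    exact_mod_cast (Nat.choose_pos (Nat.sub_le d k)).ne'
  refine (mul_eq_zero.mp ?_).resolve_right hchoose
  rw [Finset.sum_mul, ← hcoeff]
  exact Finset.sum_congr rfl fun i _ => by ring

theorem eq_zero_of_forall_sum_mul_pow_succ_eq_zero {n : ℕ} {b c : Fin n → R}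
    (hc : Function.Injective c) (hc0 : ∀ i, c i ≠ 0)
    (h : ∀ k : Fin n, ∑ i, b i * c i ^ ((k : ℕ) + 1) = 0) : b = 0 := by
  have hbc : (fun i => b i * c i) = 0 :=
    Matrix.eq_zero_of_forall_pow_sum_mul_pow_eq_zero hc fun k => by
      simpa only [mul_assoc, ← pow_succ'] using h k
  funext i
  exact (mul_eq_zero.mp (congrFun hbc i)).resolve_right (hc0 i)

theorem eq_zero_of_add_sum_X_add_C_pow_eq_zero [CharZero R] {n d : ℕ} {a₀ : R}
    {b c : Fin n → R} (hc : Function.Injective c) (hc0 : ∀ i, c i ≠ 0) (hnd : n ≤ d)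
    (h : C a₀ * X ^ d + ∑ i, C (b i) * (X + C (c i)) ^ d = 0) : a₀ = 0 ∧ b = 0 := by
  have hb : b = 0 := eq_zero_of_forall_sum_mul_pow_succ_eq_zero hc hc0 fun k =>
    sum_mul_pow_eq_zero_of_add_sum_X_add_C_pow_eq_zero h k.succ_pos (by omega)
  subst hb
  simp only [Pi.zero_apply, map_zero, zero_mul, Finset.sum_const_zero, add_zero] at h
  exact ⟨by simpa using congrArg (coeff · d) h, rfl⟩

end Polynomial

/-- `ℝ[x,y]` is modelled as `Polynomial (Polynomial ℝ)`, with `X` the variable `x` and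
coefficients polynomials in `y`. -/
theorem stmt2_general (t : ℕ) (P : Fin t → Polynomial ℝ)
    (hne : ∀ i, P i ≠ 0) (hinj : Function.Injective P)
    (d : ℕ) (hd : t ≤ d) (a : Fin (t + 1) → ℝ)
    (hrel : (C (C (a 0)) * X ^ d : Polynomial (Polynomial ℝ)) +
      ∑ i : Fin t, C (C (a i.succ)) * (X + C (P i)) ^ d = 0) :
    ∀ i, a i = 0 := by
  obtain ⟨y₀, hy₀, hy₀inj⟩ := exists_eval_ne_zero_and_injective_eval P hne hinj
  have hspec := congrArg (Polynomial.map (evalRingHom y₀)) hrel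
  simp only [Polynomial.map_add, Polynomial.map_mul, Polynomial.map_pow, map_C, Polynomial.map_X,
    Polynomial.map_sum, Polynomial.map_zero, coe_evalRingHom, eval_C] at hspec
  obtain ⟨h0, hsucc⟩ := eq_zero_of_add_sum_X_add_C_pow_eq_zero hy₀inj hy₀ hd hspec
  exact Fin.cases h0 (congrFun hsucc)

/-- A homogeneous polynomial progression of length `t+1` satisfies no nontrivial
homogeneous algebraic relation of degree `d ≥ t`. Here `ℝ[x,y]` is modelled as
`Polynomial (Polynomial ℝ)`, with `X` the variable `x` and coefficients polynomials in `y`. -/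
theorem stmt2 (t : ℕ) (ht : 0 < t) (P : Fin t → Polynomial ℝ)
    (hint : ∀ i, (∀ n : ℤ, ∃ m : ℤ, (P i).eval (n : ℝ) = m) ∧ (P i).eval 0 = 0)
    (hne : ∀ i, P i ≠ 0) (hinj : Function.Injective P)
    (d : ℕ) (hd : t ≤ d) (a : Fin (t + 1) → ℝ)
    (hrel : (C (C (a 0)) * X ^ d : Polynomial (Polynomial ℝ)) +
      ∑ i : Fin t, C (C (a i.succ)) * (X + C (P i)) ^ d = 0) :
    ∀ i, a i = 0 :=
  stmt2_general t P hne hinj d hd a hrel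
end

section
/- Let P₁, …, P_t be distinct integral polynomials and suppose the progression (x, x+P₁(y), …, x+P_t(y)) satisfies an algebraic relation of the form a₀ binom(x,t) + a₁ binom(x+P₁(y),t) + … + a_t binom(x+P_t(y),t) = 0 with a₀,…,a_t ∈ ℝ. Then, for every 1 ≤ k ≤ t, one has a₁ binom(P₁(y),k) + … + a_t binom(P_t(y),k) = 0 as polynomials in y. -/
/-!
Over `R = ℝ[y]`, the polynomials `binom(x, m)` form an `R`-basis of `R[x]`, since `binom(x, m)` has
degree `m` and unit leading coefficient `1/m!`. By Vandermonde, the coordinate of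
`binom(x + p, t)` on `binom(x, m)` is `binom(p, t - m)`, while `binom(x, t)` has no component on
`binom(x, t - k)` for `k ≥ 1`. Reading off that coordinate in the relation gives the claim.
-/

open Polynomial

/-- The binomial coefficient polynomial `binom(u,k) = u(u-1)⋯(u-k+1)/k!` in `ℝ[u]`. -/
noncomputable def binomPoly (k : ℕ) : Polynomial ℝ :=
  ((k.factorial : ℝ)⁻¹) • descPochhammer ℝ k

lemma binomPoly_eq_choose (k : ℕ) : binomPoly k = Ring.choose (X : ℝ[X]) k := by
  have hk : (k.factorial : ℝ) ≠ 0 := by positivity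
  rw [binomPoly, ← descPochhammer_map (algebraMap ℤ ℝ), ← aeval_X_left_apply (map _ _),
    aeval_map_algebraMap, aeval_eq_smeval, Ring.descPochhammer_eq_factorial_smul_choose,
    ← Nat.cast_smul_eq_nsmul ℝ, inv_smul_smul₀ hk]

lemma aeval_binomPoly {A : Type*} [CommRing A] [Algebra ℝ A] [BinomialRing A] (x : A) (k : ℕ) :
    aeval x (binomPoly k) = Ring.choose x k := by
  rw [binomPoly_eq_choose, Ring.map_choose, aeval_X]

open Finset in
lemma aeval_add_binomPoly {A : Type*} [CommRing A] [Algebra ℝ A] (x y : A) (t : ℕ) :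
    aeval (x + y) (binomPoly t) =
      ∑ ij ∈ antidiagonal t, aeval x (binomPoly ij.1) * aeval y (binomPoly ij.2) := by
  -- Mathlib makes every `ℚ≥0`-module a binomial ring.
  let _ : Module ℚ≥0 A := Module.compHom A (algebraMap ℚ≥0 ℝ)
  simp only [aeval_binomPoly]
  exact Ring.add_choose_eq t (Commute.all x y)

lemma degree_binomPoly (k : ℕ) : (binomPoly k).degree = k := by
  rw [binomPoly, smul_eq_C_mul, degree_C_mul (by positivity), degree_eq_natDegree
    (monic_descPochhammer ℝ k).ne_zero, descPochhammer_natDegree]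

lemma leadingCoeff_binomPoly (k : ℕ) : (binomPoly k).leadingCoeff = (k.factorial : ℝ)⁻¹ := by
  rw [binomPoly, smul_eq_C_mul, leadingCoeff_mul, leadingCoeff_C,
    (monic_descPochhammer ℝ k).leadingCoeff, mul_one]

section BinomialBasis

variable (R : Type*) [CommRing R] [IsDomain R] [Algebra ℝ R]

noncomputable def binomialSequence : Polynomial.Sequence R where
  elems' k := (binomPoly k).map (algebraMap ℝ R)
  degree_eq' k := by
    rw [degree_map_eq_of_injective (algebraMap ℝ R).injective, degree_binomPoly]

noncomputable def binomialBasis : Module.Basis ℕ R R[X] :=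
  (binomialSequence R).basis fun k => by
    rw [binomialSequence, leadingCoeff_map_of_injective (algebraMap ℝ R).injective,
      leadingCoeff_binomPoly]
    exact (IsUnit.mk0 _ (by positivity)).map (algebraMap ℝ R)

variable {R}

lemma binomialBasis_apply (k : ℕ) : binomialBasis R k = aeval (X : R[X]) (binomPoly k) := by
  rw [binomialBasis, Polynomial.Sequence.basis_eq_self, ← aeval_map_algebraMap R,
    aeval_X_left_apply]
  rfl

open Finset in
lemma binomialBasis_coord_aeval_X_add_C (p : R) {m t : ℕ} (hm : m ≤ t) :
    (binomialBasis R).coord m (aeval (X + C p) (binomPoly t)) = aeval p (binomPoly (t - m)) := by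
  have hterm (i j : ℕ) : aeval (X : R[X]) (binomPoly i) * aeval (C p) (binomPoly j) =
      aeval p (binomPoly j) • binomialBasis R i := by
    rw [← algebraMap_eq, aeval_algebraMap_apply, algebraMap_eq, smul_eq_C_mul, mul_comm,
      binomialBasis_apply]
  simp only [aeval_add_binomPoly, hterm, map_sum, map_smul, Module.Basis.coord_apply,
    Module.Basis.repr_self, Finsupp.single_apply, smul_eq_mul, mul_ite, mul_one, mul_zero]
  rw [Finset.sum_eq_single_of_mem (m, t - m) (by simp [hm])]
  · simp
  · intro ij hij hne
    rw [HasAntidiagonal.mem_antidiagonal] at hij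
    exact if_neg fun h => hne (Prod.ext h (by omega))

end BinomialBasis

theorem stmt8_general (t : ℕ) (P : Fin t → Polynomial ℝ)
    (a : Fin (t + 1) → ℝ)
    (hrel : a 0 • aeval (X : Polynomial (Polynomial ℝ)) (binomPoly t) +
      ∑ i : Fin t, a i.succ • aeval ((X : Polynomial (Polynomial ℝ)) + C (P i))
        (binomPoly t) = 0) :
    ∀ k : ℕ, 1 ≤ k → k ≤ t →
      ∑ i : Fin t, a i.succ • aeval (P i) (binomPoly k) = 0 := by
  intro k hk hkt
  have h := congrArg (((binomialBasis ℝ[X]).coord (t - k)).restrictScalars ℝ) hrel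
  have hne : t ≠ t - k := by omega
  rw [← binomialBasis_apply] at h
  simpa only [map_add, map_smul, map_sum, LinearMap.restrictScalars_apply,
    binomialBasis_coord_aeval_X_add_C _ (Nat.sub_le t k), Nat.sub_sub_self hkt,
    Module.Basis.coord_apply, Module.Basis.repr_self, Finsupp.single_apply, if_neg hne,
    smul_zero, zero_add, map_zero] using h

/-- If `a₀ binom(x,t) + ∑ᵢ aᵢ binom(x+Pᵢ(y),t) = 0`, then for every `1 ≤ k ≤ t`,
`∑ᵢ aᵢ binom(Pᵢ(y),k) = 0` as polynomials in `y`. -/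
theorem stmt8 (t : ℕ) (ht : 0 < t) (P : Fin t → Polynomial ℝ)
    (hint : ∀ i, (∀ n : ℤ, ∃ m : ℤ, (P i).eval (n : ℝ) = m) ∧ (P i).eval 0 = 0)
    (hinj : Function.Injective P) (a : Fin (t + 1) → ℝ)
    (hrel : a 0 • aeval (X : Polynomial (Polynomial ℝ)) (binomPoly t) +
      ∑ i : Fin t, a i.succ • aeval ((X : Polynomial (Polynomial ℝ)) + C (P i))
        (binomPoly t) = 0) :
    ∀ k : ℕ, 1 ≤ k → k ≤ t →
      ∑ i : Fin t, a i.succ • aeval (P i) (binomPoly k) = 0 :=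
  stmt8_general t P a hrel
end

section
/- Let P₁, …, P_t be distinct integral polynomials, let (Q₀,…,Q_t) be an algebraic relation satisfied by (x, x+P₁(y), …, x+P_t(y)) with Qᵢ(u) = Σ_{k=1}^{s} b_{ik} binom(u,k), and suppose deg Q₀ = s with b_{0s} ≠ 0. Let b ∈ ℝ be irrational, let α ∈ ℝ be irrational, and define functions on (ℝ/ℤ)^s by f_i(a₁,…,a_s) = e(α(b_{i1}a₁ + … + b_{is}a_s)) where e(x) = exp(2πix). Then for the standard Weyl transformation T(a₁,…,a_s) = (a₁+a₀, a₂+a₁, …, a_s+a_{s−1}) with any a₀, one has f₀(T^x a)·f₁(T^{x+P₁(y)} a) ⋯ f_t(T^{x+P_t(y)} a) = 1 for all integers x, y and all a ∈ (ℝ/ℤ)^s. -/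
open Polynomial

/-- The standard Weyl transformation, lifted to the universal cover: the coordinate `a 0` is
the translation parameter `a₀`, and `(T a)_m = a_m + a_{m−1}` for `m ≥ 1`. -/
def weylFwd (a : ℕ → ℝ) : ℕ → ℝ :=
  fun m => match m with
  | 0 => a 0
  | m + 1 => a (m + 1) + a m

/-- The inverse of the Weyl transformation. -/
def weylInv (a : ℕ → ℝ) : ℕ → ℝ
  | 0 => a 0
  | m + 1 => a (m + 1) - weylInv a m

/-- The Weyl transformation as a bijection, so that integer powers `T^x` make sense. -/
def weylEquiv : Equiv.Perm (ℕ → ℝ) where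
  toFun := weylFwd
  invFun := weylInv
  left_inv := by
    intro a; funext m
    induction m with
    | zero => rfl
    | succ m ih =>
      simp only [weylInv, weylFwd, ih]
      ring
  right_inv := by
    intro a; funext m
    induction m with
    | zero => rfl
    | succ m ih =>
      simp only [weylFwd, weylInv]
      ring

/-!
The iterates of the Weyl map have coordinates `(Tⁿa)_k = ∑_{j+m=k} binom(n,j) a_m`, and
`Δ^m binom(·,k) = binom(·,k-m)`, so the phase `∑_k b_{ik} (Tⁿa)_k` of `fᵢ` equals
`∑_m (Δ^m Qᵢ)(n) a_m`. Forward differences in `x` commute with the shifts `x ↦ x + Pᵢ(y)`,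
so each `Δ^m` applied to the relation is again a relation: for every `m` the coefficients
of `a_m` cancel over `i`, and the total phase vanishes.
-/

open Finset fwdDiff

namespace Ring

variable {R : Type*} [Ring R] [BinomialRing R]

theorem fwdDiff_choose_succ (k : ℕ) :
    Δ_[1] (fun r : R ↦ choose r (k + 1)) = fun r ↦ choose r k := by
  ext r
  simp only [fwdDiff, choose_succ_succ, add_sub_cancel_right]

theorem fwdDiff_iter_choose_add (m j : ℕ) :
    Δ_[1] ^[m] (fun r : R ↦ choose r (m + j)) = fun r ↦ choose r j := by
  induction m generalizing j with
  | zero => simp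
  | succ m ih => rw [Function.iterate_succ_apply, add_right_comm, fwdDiff_choose_succ, ih]

theorem fwdDiff_iter_choose_of_lt {k m : ℕ} (h : k < m) :
    Δ_[1] ^[m] (fun r : R ↦ choose r k) = 0 := by
  obtain ⟨j, rfl⟩ := Nat.exists_eq_add_of_lt h
  have hk : Δ_[1] ^[k] (fun r : R ↦ choose r k) = fun _ ↦ 1 := by
    simpa using fwdDiff_iter_choose_add (R := R) k 0
  rw [show k + j + 1 = j + 1 + k by omega, Function.iterate_add_apply, hk,
    Function.iterate_succ_apply, fwdDiff_const]
  exact Function.iterate_fixed (fwdDiff_const 1 0) j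

theorem sum_antidiagonal_choose_mul_eq_sum_fwdDiff_iter {k N : ℕ} (hk : k < N) (r : R)
    (a : ℕ → R) :
    ∑ p ∈ antidiagonal k, choose r p.1 * a p.2 =
      ∑ m ∈ range N, Δ_[1] ^[m] (fun u ↦ choose u k) r * a m := by
  rw [← sum_range_add_sum_Ico _ hk, sum_eq_zero (s := Ico _ _), add_zero,
    ← Nat.sum_antidiagonal_swap, Nat.sum_antidiagonal_eq_sum_range_succ_mk]
  · refine sum_congr rfl fun m hm ↦ ?_
    obtain ⟨j, rfl⟩ := Nat.exists_eq_add_of_le (Nat.lt_succ_iff.mp (mem_range.mp hm))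
    simp [fwdDiff_iter_choose_add]
  · intro m hm
    rw [fwdDiff_iter_choose_of_lt (mem_Ico.mp hm).1, Pi.zero_apply, zero_mul]

theorem sum_mul_sum_antidiagonal_choose_mul {S : Finset ℕ} {N : ℕ} (hS : ∀ k ∈ S, k < N)
    (c : ℕ → R) (r : R) (a : ℕ → R) :
    ∑ k ∈ S, c k * ∑ p ∈ antidiagonal k, choose r p.1 * a p.2 =
      ∑ m ∈ range N, Δ_[1] ^[m] (fun u ↦ ∑ k ∈ S, c k * choose u k) r * a m := by
  have hsmul :
      (fun u ↦ ∑ k ∈ S, c k * choose u k) = ∑ k ∈ S, c k • fun u : R ↦ choose u k := by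
    ext u; simp
  simp_rw [hsmul, fwdDiff_iter_finsetSum, fwdDiff_iter_const_smul, Finset.sum_apply,
    Pi.smul_apply, smul_eq_mul, sum_mul]
  rw [sum_comm]
  refine sum_congr rfl fun k hk ↦ ?_
  rw [sum_antidiagonal_choose_mul_eq_sum_fwdDiff_iter (hS k hk), mul_sum]
  simp only [mul_assoc]

end Ring

theorem fwdDiff_iter_sum_comp_add_eq_zero {ι M G : Type*} [AddCommMonoid M] [AddCommGroup G]
    (h : M) (S : Finset ι) (g : ι → M → G) (c : ι → M)
    (hg : ∀ x, ∑ i ∈ S, g i (x + c i) = 0) (m : ℕ) (x : M) :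
    ∑ i ∈ S, Δ_[h] ^[m] (g i) (x + c i) = 0 := by
  have hzero : ∑ i ∈ S, (fun r ↦ g i (r + c i)) = 0 := by
    ext r; simpa using hg r
  have hconst : Δ_[h] (0 : M → G) = 0 := fwdDiff_const h 0
  calc ∑ i ∈ S, Δ_[h] ^[m] (g i) (x + c i)
      = Δ_[h] ^[m] (∑ i ∈ S, fun r ↦ g i (r + c i)) x := by
        simp only [fwdDiff_iter_finsetSum, Finset.sum_apply, fwdDiff_iter_comp_add]
    _ = 0 := by rw [hzero, Function.iterate_fixed hconst, Pi.zero_apply]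

theorem Polynomial.sum_eval_add_eval_eq_zero {ι R : Type*} [CommRing R] {S : Finset ι}
    {Q P : ι → R[X]} (h : ∑ i ∈ S, aeval (X + C (P i)) (Q i) = 0) (x y : R) :
    ∑ i ∈ S, (Q i).eval (x + (P i).eval y) = 0 := by
  let ψ : R[X][X] →ₐ[R] R := aevalTower (aeval y) x
  have hψ (i : ι) : ψ (X + C (P i)) = x + (P i).eval y := by
    simp [ψ]
  simpa [← aeval_algHom_apply, hψ] using congrArg ψ h

theorem weylFwd_sum_antidiagonal_choose_mul (r : ℝ) (a : ℕ → ℝ) :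
    weylFwd (fun k ↦ ∑ p ∈ antidiagonal k, Ring.choose r p.1 * a p.2) =
      fun k ↦ ∑ p ∈ antidiagonal k, Ring.choose (r + 1) p.1 * a p.2 := by
  ext (_ | k)
  · simp [weylFwd]
  · simp only [weylFwd, Nat.sum_antidiagonal_succ, Ring.choose_succ_succ, Ring.choose_zero_right,
      add_mul, sum_add_distrib]
    ring

theorem weylEquiv_zpow_apply (n : ℤ) (a : ℕ → ℝ) (k : ℕ) :
    (weylEquiv ^ n) a k = ∑ p ∈ antidiagonal k, Ring.choose (n : ℝ) p.1 * a p.2 := by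
  suffices ∀ n : ℤ, (weylEquiv ^ n) a = fun k ↦
      ∑ p ∈ antidiagonal k, Ring.choose (n : ℝ) p.1 * a p.2 from congrFun (this n) k
  have hstep (n : ℤ) :
      weylEquiv (fun k ↦ ∑ p ∈ antidiagonal k, Ring.choose (n : ℝ) p.1 * a p.2) =
        fun k ↦ ∑ p ∈ antidiagonal k, Ring.choose ((n + 1 : ℤ) : ℝ) p.1 * a p.2 := by
    push_cast
    exact weylFwd_sum_antidiagonal_choose_mul _ a
  intro n
  induction n using Int.induction_on with
  | zero =>
    ext k
    simp [Ring.choose_zero_ite, Nat.sum_antidiagonal_eq_sum_range_succ_mk]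
  | succ n ih => rw [← hstep, ← ih, ← Equiv.Perm.mul_apply, ← zpow_one_add, add_comm]
  | pred n ih =>
    apply weylEquiv.injective
    rw [← Equiv.Perm.mul_apply, ← zpow_one_add, hstep]
    simpa using ih

theorem sum_mul_weylEquiv_zpow_apply {S : Finset ℕ} {N : ℕ} (hS : ∀ k ∈ S, k < N)
    (c : ℕ → ℝ) (n : ℤ) (a : ℕ → ℝ) :
    ∑ k ∈ S, c k * (weylEquiv ^ n) a k =
      ∑ m ∈ range N, Δ_[1] ^[m] (fun u ↦ ∑ k ∈ S, c k * Ring.choose u k) n * a m := by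
  simp_rw [weylEquiv_zpow_apply]
  exact Ring.sum_mul_sum_antidiagonal_choose_mul hS c _ a

theorem binomPoly_eval (k : ℕ) (u : ℝ) : (binomPoly k).eval u = Ring.choose u k := by
  rw [Ring.choose_eq_smul, binomPoly, eval_smul, ← descPochhammer_map (algebraMap ℤ ℝ),
    eval_map_algebraMap, aeval_eq_smeval]

theorem eval_sum_C_mul_binomPoly_succ (c : ℕ → ℝ) (s : ℕ) (u : ℝ) :
    (∑ k ∈ range s, C (c (k + 1)) * binomPoly (k + 1)).eval u =
      ∑ k ∈ Icc 1 s, c k * Ring.choose u k := by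
  rw [eval_finsetSum, ← Ico_add_one_right_eq_Icc, sum_Ico_eq_sum_range, Nat.add_sub_cancel]
  simp [binomPoly_eval, add_comm 1]

theorem stmt16_general (t : ℕ) (s : ℕ)
    (P : Fin t → Polynomial ℝ)
    (Pz : Fin t → ℤ → ℤ) (hPz : ∀ i y, (P i).eval ((y : ℤ) : ℝ) = ((Pz i y : ℤ) : ℝ))
    (b : Fin (t + 1) → ℕ → ℝ) (Q : Fin (t + 1) → Polynomial ℝ)
    (hQ : ∀ i, Q i = ∑ k ∈ Finset.range s, C (b i (k + 1)) * binomPoly (k + 1))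
    (hrel : aeval (X : Polynomial (Polynomial ℝ)) (Q 0) +
      ∑ i : Fin t, aeval ((X : Polynomial (Polynomial ℝ)) + C (P i)) (Q i.succ) = 0)
    (α : ℝ)
    (f : Fin (t + 1) → (ℕ → ℝ) → ℂ)
    (hf : ∀ i a, f i a = Complex.exp (2 * Real.pi * Complex.I *
      (α * ∑ k ∈ Finset.Icc 1 s, b i k * a k))) :
    ∀ (x y : ℤ) (a : ℕ → ℝ),
      f 0 ((weylEquiv ^ x) a) *
        ∏ i : Fin t, f i.succ ((weylEquiv ^ (x + Pz i y)) a) = 1 := by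
  intro x y a
  let n : Fin (t + 1) → ℤ := Fin.cons x fun i ↦ x + Pz i y
  let P' : Fin (t + 1) → ℝ[X] := Fin.cons 0 P
  have hn (i : Fin (t + 1)) : (n i : ℝ) = x + (P' i).eval (y : ℝ) := by
    cases i using Fin.cases <;> simp [n, P', hPz]
  have hQeval (i : Fin (t + 1)) :
      (fun u ↦ ∑ k ∈ Icc 1 s, b i k * Ring.choose u k) = (Q i).eval := by
    ext u; rw [hQ, eval_sum_C_mul_binomPoly_succ]
  have hrelEval (u : ℝ) : ∑ i, (Q i).eval (u + (P' i).eval (y : ℝ)) = 0 :=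
    sum_eval_add_eval_eq_zero (by simpa [Fin.sum_univ_succ, P'] using hrel) u y
  have hphase : ∑ i, ∑ k ∈ Icc 1 s, b i k * (weylEquiv ^ n i) a k = 0 := by
    have hIcc (k : ℕ) (hk : k ∈ Icc 1 s) : k < s + 1 := Nat.lt_succ_of_le (mem_Icc.mp hk).2
    simp_rw [sum_mul_weylEquiv_zpow_apply hIcc, hQeval, hn]
    rw [sum_comm]
    simp_rw [← sum_mul, fwdDiff_iter_sum_comp_add_eq_zero (1 : ℝ) univ (fun i ↦ (Q i).eval)
      (fun i ↦ (P' i).eval (y : ℝ)) hrelEval, zero_mul, sum_const_zero]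
  calc f 0 ((weylEquiv ^ x) a) * ∏ i : Fin t, f i.succ ((weylEquiv ^ (x + Pz i y)) a)
      = ∏ i, f i ((weylEquiv ^ n i) a) := by simp [Fin.prod_univ_succ, n]
    _ = Complex.exp (2 * Real.pi * Complex.I * α *
          ((∑ i, ∑ k ∈ Icc 1 s, b i k * (weylEquiv ^ n i) a k : ℝ) : ℂ)) := by
        simp_rw [hf, ← Complex.exp_sum]
        push_cast
        simp_rw [mul_sum, mul_assoc]
    _ = 1 := by rw [hphase, Complex.ofReal_zero, mul_zero, Complex.exp_zero]

/-- Given an algebraic relation `(Q₀, …, Q_t)` for the progression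
`(x, x+P₁(y), …, x+P_t(y))` with `Qᵢ(u) = ∑_{k=1}^s b_{ik} binom(u,k)`, `deg Q₀ = s` and
`b_{0s} ≠ 0`, the functions `fᵢ(a) = e(α(b_{i1}a₁ + … + b_{is}a_s))` satisfy
`f₀(T^x a)·∏ᵢ fᵢ(T^{x+Pᵢ(y)} a) = 1` for all integers `x, y` and all points `a`, where `T`
is the standard Weyl transformation (with arbitrary translation parameter `a 0`). -/
theorem stmt16 (t : ℕ) (ht : 0 < t) (s : ℕ) (hs : 0 < s)
    (P : Fin t → Polynomial ℝ)
    (hint : ∀ i, (∀ n : ℤ, ∃ m : ℤ, (P i).eval (n : ℝ) = m) ∧ (P i).eval 0 = 0)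
    (hinj : Function.Injective P)
    (Pz : Fin t → ℤ → ℤ) (hPz : ∀ i y, (P i).eval ((y : ℤ) : ℝ) = ((Pz i y : ℤ) : ℝ))
    (b : Fin (t + 1) → ℕ → ℝ) (Q : Fin (t + 1) → Polynomial ℝ)
    (hQ : ∀ i, Q i = ∑ k ∈ Finset.range s, C (b i (k + 1)) * binomPoly (k + 1))
    (hrel : aeval (X : Polynomial (Polynomial ℝ)) (Q 0) +
      ∑ i : Fin t, aeval ((X : Polynomial (Polynomial ℝ)) + C (P i)) (Q i.succ) = 0)
    (hdeg : (Q 0).natDegree = s) (hb0s : b 0 s ≠ 0)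
    (b₀ : ℝ) (hb₀ : Irrational b₀) (α : ℝ) (hα : Irrational α)
    (f : Fin (t + 1) → (ℕ → ℝ) → ℂ)
    (hf : ∀ i a, f i a = Complex.exp (2 * Real.pi * Complex.I *
      (α * ∑ k ∈ Finset.Icc 1 s, b i k * a k))) :
    ∀ (x y : ℤ) (a : ℕ → ℝ),
      f 0 ((weylEquiv ^ x) a) *
        ∏ i : Fin t, f i.succ ((weylEquiv ^ (x + Pz i y)) a) = 1 :=
  stmt16_general t s P Pz hPz b Q hQ hrel α f hf
end
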